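/- Let 𝔚₁, 𝔚₂ be compound BCCs with D(𝔚₁,𝔚₂) ≤ ε for ε ∈ (0,1). Fix n ∈ ℕ and random variables U—V—Xⁿ. Let A₁(i) := (1/n)( min_{s∈Sᵢ} I(V;Yⁿ_s|U) − max_{s∈Sᵢ} I(V;Zⁿ_s|U) ) for i = 1,2. Then |A₁(1) − A₁(2)| ≤ 4ε·log(|𝒴||𝒵|) + 8H₂(ε). -/

import Mathlib

open Finset Real

noncomputable def H2 (e : ℝ) : ℝ := -(e * Real.logb 2 e) - (1 - e) * Real.logb 2 (1 - e)

def IsPMF {α : Type*} [Fintype α] (p : α → ℝ) : Prop :=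
  (∀ a, 0 ≤ p a) ∧ ∑ a, p a = 1

noncomputable def ent {α : Type*} [Fintype α] (p : α → ℝ) : ℝ :=
  -∑ a, p a * Real.logb 2 (p a)

/-- Mutual information `I(A ; B)` for a joint distribution on `α × β`. -/
noncomputable def MI {α β : Type*} [Fintype α] [Fintype β] (p : α × β → ℝ) : ℝ :=
  ent (fun a => ∑ b, p (a, b)) + ent (fun b => ∑ a, p (a, b)) - ent p

/-- Conditional mutual information `I(B ; C | A)` for a joint distribution on `α × β × γ`. -/
noncomputable def condMI {α β γ : Type*} [Fintype α] [Fintype β] [Fintype γ]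
    (p : α × β × γ → ℝ) : ℝ :=
  ent (fun x : α × β => ∑ c, p (x.1, x.2, c)) + ent (fun x : α × γ => ∑ b, p (x.1, b, x.2))
    - ent p - ent (fun a => ∑ b, ∑ c, p (a, b, c))

/-- Joint distribution of `(U, Yⁿ)` when `Xⁿ` is generated via `U — V — Xⁿ`
and sent through the memoryless extension of the channel `Ch`. -/
noncomputable def PUOut {U V X Y : Type*} [Fintype V] [Fintype X]
    (n : ℕ) (Ch : X → Y → ℝ) (PU : U → ℝ) (PVU : U → V → ℝ)
    (E : V → (Fin n → X) → ℝ) : U × (Fin n → Y) → ℝ :=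
  fun t => ∑ v, ∑ x : Fin n → X, (∏ i : Fin n, Ch (x i) (t.2 i)) * E v x * PVU t.1 v * PU t.1

/-- Joint distribution of `(U, V, Yⁿ)` when `Xⁿ` is generated via `U — V — Xⁿ`
and sent through the memoryless extension of the channel `Ch`. -/
noncomputable def PUVOut {U V X Y : Type*} [Fintype X]
    (n : ℕ) (Ch : X → Y → ℝ) (PU : U → ℝ) (PVU : U → V → ℝ)
    (E : V → (Fin n → X) → ℝ) : U × V × (Fin n → Y) → ℝ :=
  fun t => ∑ x : Fin n → X, (∏ i : Fin n, Ch (x i) (t.2.2 i)) * E t.2.1 x * PVU t.1 t.2.1 * PU t.1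

/-!
Write `η x = -x log x`. For `x, y ∈ [0, 1]` with `|x - y| ≤ 1/2` one has
`|η x - η y| ≤ η |x - y|`, and summing this (with Jensen for `η`) gives a Fannes-type bound: two
distributions on `m` points at `ℓ¹`-distance at most `ε` have entropies within
`2 ε log m + 2 h(ε)`. Given the side information and the other outputs, one output coordinate of
a memoryless channel is distributed as a mixture of rows of the channel used there; changing that
channel makes each row, hence each mixture, `ε`-close, so the joint entropy moves by at most this
bound. A hybrid argument over the `n` coordinates bounds the change of `H(U, Yⁿ)` and
`H(U, V, Yⁿ)` by `n` times it, while `H(U, V)` and `H(U)` do not depend on the channel. Thus every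
`I(V; Yⁿ | U)` moves by at most `n δ₂(ε, |𝒴|)`, and as `D ≤ ε` matches every state of one family
with an `ε`-close state of the other, so do the minimum over the legitimate states and the maximum
over the eavesdropper states.
-/

namespace Real

lemma negMulLog_add_le {x y : ℝ} (hx : 0 ≤ x) (hy : 0 ≤ y) :
    negMulLog (x + y) ≤ negMulLog x + negMulLog y := by
  rcases hx.eq_or_lt with rfl | hx
  · simp
  rcases hy.eq_or_lt with rfl | hy
  · simp
  have h1 : log x ≤ log (x + y) := log_le_log hx (by linarith)
  have h2 : log y ≤ log (x + y) := log_le_log hy (by linarith)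
  simp only [negMulLog, neg_mul]
  nlinarith

lemma neg_log_one_sub_le {v : ℝ} (hv₀ : 0 ≤ v) (hv : v ≤ 1 / 2) :
    -log (1 - v) ≤ 2 * log 2 * v := by
  -- concavity of `log` on the chord from `1` to `1 / 2`
  have h := strictConcaveOn_log_Ioi.concaveOn.2 (Set.mem_Ioi.2 one_pos)
    (Set.mem_Ioi.2 (by norm_num : (0 : ℝ) < 1 / 2)) (by linarith : 0 ≤ 1 - 2 * v)
    (by linarith : 0 ≤ 2 * v) (by ring)
  simp only [smul_eq_mul, log_one, mul_zero, zero_add, one_div, log_inv] at h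
  have : (1 - 2 * v) * 1 + 2 * v * 2⁻¹ = 1 - v := by ring
  rw [this] at h
  linarith

lemma two_mul_log_two_mul_one_sub_le_neg_log {v : ℝ} (hv₀ : 0 < v) (hv : v ≤ 1 / 2) :
    2 * log 2 * (1 - v) ≤ -log v := by
  have h := log_le_sub_one_of_pos (by linarith : 0 < 2 * v)
  rw [log_mul two_ne_zero hv₀.ne'] at h
  nlinarith [log_two_lt_d9]

lemma negMulLog_one_sub_le {v : ℝ} (hv₀ : 0 ≤ v) (hv : v ≤ 1 / 2) :
    negMulLog (1 - v) ≤ negMulLog v := by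
  rcases hv₀.eq_or_lt with rfl | hv₀
  · simp
  have h1 := neg_log_one_sub_le hv₀.le hv
  have h2 := two_mul_log_two_mul_one_sub_le_neg_log hv₀ hv
  simp only [negMulLog, neg_mul]
  nlinarith

lemma negMulLog_sub_negMulLog_add_le {x v : ℝ} (hx : 0 ≤ x) (hv : 0 ≤ v) (hxv : x + v ≤ 1) :
    negMulLog x - negMulLog (x + v) ≤ negMulLog (1 - v) := by
  rcases hv.eq_or_lt with rfl | hv
  · simp
  -- slopes of the concave `negMulLog` decrease: compare the chords over `[x, x + v]`, `[x, 1]`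
  -- and `[1 - v, 1]`
  have h1 : slope negMulLog x 1 ≤ slope negMulLog x (x + v) :=
    concaveOn_negMulLog.slope_anti (Set.mem_Ici.2 hx)
      ⟨Set.mem_Ici.2 (by linarith), by simp; linarith⟩
      ⟨Set.mem_Ici.2 (by linarith), by simp; linarith⟩ hxv
  have h2 : slope negMulLog 1 (1 - v) ≤ slope negMulLog 1 x :=
    concaveOn_negMulLog.slope_anti (Set.mem_Ici.2 zero_le_one)
      ⟨Set.mem_Ici.2 hx, by simp; linarith⟩
      ⟨Set.mem_Ici.2 (by linarith), by simp; linarith⟩ (by linarith)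
  rw [slope_comm negMulLog 1 x] at h2
  have h := h2.trans h1
  rw [slope_def_field, slope_def_field, negMulLog_one, add_sub_cancel_left,
    show 1 - v - 1 = -v by ring, div_neg, ← neg_div, div_le_div_iff_of_pos_right hv] at h
  linarith

lemma abs_negMulLog_sub_negMulLog_le {x y : ℝ} (hx : 0 ≤ x) (hy : 0 ≤ y) (hx₁ : x ≤ 1)
    (hy₁ : y ≤ 1) (h : |x - y| ≤ 1 / 2) : |negMulLog x - negMulLog y| ≤ negMulLog |x - y| := by
  wlog hxy : x ≤ y generalizing x y
  · rw [abs_sub_comm, abs_sub_comm x]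
    exact this hy hx hy₁ hx₁ (abs_sub_comm x y ▸ h) (le_of_not_ge hxy)
  obtain ⟨v, hv, rfl⟩ : ∃ v, 0 ≤ v ∧ y = x + v := ⟨y - x, by linarith, by ring⟩
  rw [show x - (x + v) = -v by ring, abs_neg, abs_of_nonneg hv] at h ⊢
  rw [abs_le]
  constructor
  · linarith [negMulLog_add_le hx hv]
  · linarith [negMulLog_sub_negMulLog_add_le hx hv hy₁, negMulLog_one_sub_le hv h]

lemma sum_negMulLog_le {α : Type*} [Fintype α] {t : α → ℝ} (ht : ∀ a, 0 ≤ t a) :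
    ∑ a, negMulLog (t a) ≤ negMulLog (∑ a, t a) + (∑ a, t a) * log (Fintype.card α) := by
  rcases isEmpty_or_nonempty α with _ | _
  · simp
  set m : ℝ := (Fintype.card α : ℝ)
  have hm : 0 < m := by simp only [m]; exact_mod_cast Fintype.card_pos
  -- Jensen for the concave `negMulLog` at the points `m * t a` with uniform weights
  have hj := concaveOn_negMulLog.le_map_sum (t := univ) (w := fun _ => m⁻¹)
    (p := fun a => m * t a) (fun _ _ => inv_nonneg.2 hm.le)
    (by simp [card_univ, m, hm.ne']) (fun a _ => Set.mem_Ici.2 (mul_nonneg hm.le (ht a)))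
  have hscale : ∀ a, m⁻¹ * negMulLog (m * t a) = negMulLog (t a) - t a * log m := by
    intro a
    rw [negMulLog_mul]
    simp only [negMulLog]
    field_simp
    ring
  simp only [smul_eq_mul, hscale, inv_mul_cancel_left₀ hm.ne', sum_sub_distrib, ← sum_mul] at hj
  linarith

end Real

namespace InformationTheory

/-- Shannon entropy in nats (`ent` is the same in bits). -/
noncomputable def natEnt {α : Type*} [Fintype α] (p : α → ℝ) : ℝ := ∑ a, negMulLog (p a)

section Entropy

variable {α β : Type*} [Fintype α] [Fintype β]

lemma ent_eq_natEnt_div_log_two (p : α → ℝ) : ent p = natEnt p / log 2 := by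
  simp only [ent, natEnt, sum_div, ← sum_neg_distrib, negMulLog, logb]
  exact sum_congr rfl fun a _ => by ring

lemma H2_eq_binEntropy_div_log_two (e : ℝ) : H2 e = binEntropy e / log 2 := by
  simp only [H2, binEntropy, logb, log_inv]
  ring

lemma natEnt_comp_equiv (e : β ≃ α) (p : α → ℝ) : natEnt (fun b => p (e b)) = natEnt p :=
  e.sum_comp fun a => negMulLog (p a)

lemma natEnt_const_mul (c : ℝ) (p : α → ℝ) :
    natEnt (fun a => c * p a) = c * natEnt p + (∑ a, p a) * negMulLog c := by
  simp only [natEnt, negMulLog_mul, sum_add_distrib, mul_sum, sum_mul]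
  exact add_comm _ _

lemma IsPMF.le_one {p : α → ℝ} (hp : IsPMF p) (a : α) : p a ≤ 1 :=
  hp.2 ▸ single_le_sum (fun i _ => hp.1 i) (mem_univ a)

lemma natEnt_nonneg {p : α → ℝ} (hp : IsPMF p) : 0 ≤ natEnt p :=
  sum_nonneg fun a _ => negMulLog_nonneg (hp.1 a) (IsPMF.le_one hp a)

lemma natEnt_le_log_card {p : α → ℝ} (hp : IsPMF p) : natEnt p ≤ log (Fintype.card α) := by
  simpa [natEnt, hp.2] using sum_negMulLog_le hp.1

lemma abs_natEnt_sub_le_of_le_half {p q : α → ℝ} (hp : IsPMF p) (hq : IsPMF q) {ε : ℝ}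
    (hε : ε ≤ 1 / 2) (h : ∑ a, |p a - q a| ≤ ε) :
    |natEnt p - natEnt q| ≤ ε * log (Fintype.card α) + binEntropy ε := by
  set θ := ∑ a, |p a - q a|
  have hθ : 0 ≤ θ := sum_nonneg fun _ _ => abs_nonneg _
  have hterm : ∀ a, |p a - q a| ≤ 1 / 2 := fun a =>
    (single_le_sum (f := fun a => |p a - q a|) (fun _ _ => abs_nonneg _) (mem_univ a)).trans
      (h.trans hε)
  have hlog : 0 ≤ log (Fintype.card α) := log_natCast_nonneg _
  have hθε : negMulLog θ ≤ binEntropy ε := calc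
    negMulLog θ ≤ binEntropy θ := by
      rw [binEntropy_eq_negMulLog_add_negMulLog_one_sub]
      linarith [negMulLog_nonneg (x := 1 - θ) (by linarith) (by linarith)]
    _ ≤ binEntropy ε := binEntropy_strictMonoOn.monotoneOn ⟨hθ, by linarith⟩
      ⟨hθ.trans h, by linarith⟩ h
  calc |natEnt p - natEnt q| ≤ ∑ a, |negMulLog (p a) - negMulLog (q a)| := by
        rw [natEnt, natEnt, ← sum_sub_distrib]
        exact abs_sum_le_sum_abs _ _
    _ ≤ ∑ a, negMulLog |p a - q a| := sum_le_sum fun a _ =>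
        abs_negMulLog_sub_negMulLog_le (hp.1 a) (hq.1 a) (IsPMF.le_one hp a)
          (IsPMF.le_one hq a) (hterm a)
    _ ≤ negMulLog θ + θ * log (Fintype.card α) := sum_negMulLog_le fun _ => abs_nonneg _
    _ ≤ ε * log (Fintype.card α) + binEntropy ε := by nlinarith

lemma abs_natEnt_sub_le {p q : α → ℝ} (hp : IsPMF p) (hq : IsPMF q) {ε : ℝ} (hε : ε ≤ 1)
    (h : ∑ a, |p a - q a| ≤ ε) :
    |natEnt p - natEnt q| ≤ 2 * ε * log (Fintype.card α) + 2 * binEntropy ε := by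
  have hε₀ : 0 ≤ ε := (sum_nonneg fun _ _ => abs_nonneg _).trans h
  have hlog : 0 ≤ log (Fintype.card α) := log_natCast_nonneg _
  have hbin : 0 ≤ binEntropy ε := binEntropy_nonneg hε₀ hε
  rcases le_or_gt ε (1 / 2) with hhalf | hhalf
  · nlinarith [abs_natEnt_sub_le_of_le_half hp hq hhalf h]
  · have : |natEnt p - natEnt q| ≤ log (Fintype.card α) := abs_sub_le_iff.2
      ⟨by linarith [natEnt_le_log_card hp, natEnt_nonneg hq],
        by linarith [natEnt_le_log_card hq, natEnt_nonneg hp]⟩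
    nlinarith

lemma abs_natEnt_sub_le_of_sum_eq {p q : α → ℝ} {w ε : ℝ} (hp : ∀ a, 0 ≤ p a)
    (hq : ∀ a, 0 ≤ q a) (hpw : ∑ a, p a = w) (hqw : ∑ a, q a = w) (hε : ε ≤ 1)
    (h : ∑ a, |p a - q a| ≤ ε * w) :
    |natEnt p - natEnt q| ≤ w * (2 * ε * log (Fintype.card α) + 2 * binEntropy ε) := by
  rcases (hpw ▸ sum_nonneg fun a _ => hp a : 0 ≤ w).eq_or_lt with rfl | hw
  · have hp0 := (sum_eq_zero_iff_of_nonneg fun a _ => hp a).1 hpw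
    have hq0 := (sum_eq_zero_iff_of_nonneg fun a _ => hq a).1 hqw
    simp [natEnt, hp0, hq0]
  have hnorm : ∀ r : α → ℝ, (∀ a, 0 ≤ r a) → ∑ a, r a = w → IsPMF fun a => r a / w :=
    fun r hr hrw => ⟨fun a => div_nonneg (hr a) hw.le, by rw [← sum_div, hrw, div_self hw.ne']⟩
  have hscale : ∀ r : α → ℝ, ∑ a, r a = w →
      natEnt r = w * natEnt (fun a => r a / w) + negMulLog w := by
    intro r hrw
    have := natEnt_const_mul w (fun a => r a / w)
    simp only [mul_div_cancel₀ _ hw.ne', ← sum_div, hrw, div_self hw.ne', one_mul] at this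
    exact this
  rw [hscale p hpw, hscale q hqw, add_sub_add_right_eq_sub, ← mul_sub, abs_mul, abs_of_pos hw]
  refine mul_le_mul_of_nonneg_left
    (abs_natEnt_sub_le (hnorm p hp hpw) (hnorm q hq hqw) hε ?_) hw.le
  simp only [← sub_div, abs_div, abs_of_pos hw, ← sum_div]
  rwa [div_le_iff₀ hw]

end Entropy

section Channel

variable {A B X Y β ι : Type*}

/-- Joint law of `(b, y)` when an input `x`, drawn jointly with `b` according to `c`, is sent
through the channel `L`. -/
noncomputable def channelOut [Fintype Y] (L : Y → β → ℝ) (c : B → Y → ℝ) : B × β → ℝ :=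
  fun t => ∑ x, L x t.2 * c t.1 x

/-- The memoryless channel using `K i` in coordinate `i`. -/
noncomputable def prodChannel [Fintype ι] (K : ι → X → β → ℝ) (x : ι → X) (y : ι → β) : ℝ :=
  ∏ i, K i (x i) (y i)

lemma sum_channelOut [Fintype Y] [Fintype β] {L : Y → β → ℝ} (hL : ∀ x, IsPMF (L x))
    (c : B → Y → ℝ) (b : B) :
    ∑ y, channelOut L c (b, y) = ∑ x, c b x := by
  simp only [channelOut]
  rw [sum_comm]
  exact sum_congr rfl fun x _ => by rw [← sum_mul, (hL x).2, one_mul]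

lemma sum_abs_channelOut_sub_le [Fintype Y] [Fintype β] {L₁ L₂ : Y → β → ℝ} {c : B → Y → ℝ}
    (hc : ∀ b x, 0 ≤ c b x) {ε : ℝ} (h : ∀ x, ∑ y, |L₁ x y - L₂ x y| ≤ ε) (b : B) :
    ∑ y, |channelOut L₁ c (b, y) - channelOut L₂ c (b, y)| ≤ ε * ∑ x, c b x := calc
  _ = ∑ y, |∑ x, (L₁ x y - L₂ x y) * c b x| := by
      simp only [channelOut, ← sum_sub_distrib, sub_mul]
  _ ≤ ∑ y, ∑ x, |L₁ x y - L₂ x y| * c b x := sum_le_sum fun y _ =>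
      (abs_sum_le_sum_abs _ _).trans_eq
        (sum_congr rfl fun x _ => by rw [abs_mul, abs_of_nonneg (hc b x)])
  _ = ∑ x, (∑ y, |L₁ x y - L₂ x y|) * c b x := by simp only [sum_mul]; exact sum_comm
  _ ≤ ∑ x, ε * c b x := sum_le_sum fun x _ => mul_le_mul_of_nonneg_right (h x) (hc b x)
  _ = ε * ∑ x, c b x := (mul_sum _ _ _).symm

lemma abs_natEnt_channelOut_sub_le [Fintype B] [Fintype Y] [Fintype β] {L₁ L₂ : Y → β → ℝ}
    (hL₁ : ∀ x, IsPMF (L₁ x)) (hL₂ : ∀ x, IsPMF (L₂ x)) {c : B → Y → ℝ} (hc : ∀ b x, 0 ≤ c b x)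
    (hc₁ : ∑ b, ∑ x, c b x = 1) {ε : ℝ} (hε : ε ≤ 1) (h : ∀ x, ∑ y, |L₁ x y - L₂ x y| ≤ ε) :
    |natEnt (channelOut L₁ c) - natEnt (channelOut L₂ c)|
      ≤ 2 * ε * log (Fintype.card β) + 2 * binEntropy ε := by
  have hout : ∀ {L : Y → β → ℝ}, (∀ x, IsPMF (L x)) → ∀ t, 0 ≤ channelOut L c t :=
    fun hL t => sum_nonneg fun x _ => mul_nonneg ((hL x).1 _) (hc _ _)
  calc |natEnt (channelOut L₁ c) - natEnt (channelOut L₂ c)|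
      = |∑ b, (natEnt (fun y => channelOut L₁ c (b, y))
          - natEnt (fun y => channelOut L₂ c (b, y)))| := by
        rw [natEnt, natEnt, Fintype.sum_prod_type, Fintype.sum_prod_type, ← sum_sub_distrib]
        rfl
    _ ≤ ∑ b, (∑ x, c b x) * (2 * ε * log (Fintype.card β) + 2 * binEntropy ε) :=
        (abs_sum_le_sum_abs _ _).trans <| sum_le_sum fun b _ =>
          abs_natEnt_sub_le_of_sum_eq (fun _ => hout hL₁ _) (fun _ => hout hL₂ _)
            (sum_channelOut hL₁ c b) (sum_channelOut hL₂ c b) hε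
            (sum_abs_channelOut_sub_le hc h b)
    _ = _ := by rw [← sum_mul, hc₁, one_mul]

lemma isPMF_prodChannel [Fintype ι] [DecidableEq ι] [Fintype β] {K : ι → X → β → ℝ}
    (hK : ∀ i x, IsPMF (K i x)) (x : ι → X) :
    IsPMF (prodChannel K x) :=
  ⟨fun y => prod_nonneg fun i _ => (hK i (x i)).1 _, by
    show ∑ y : ι → β, ∏ i, K i (x i) (y i) = 1
    rw [← Fintype.prod_sum]
    exact prod_eq_one fun i _ => (hK i (x i)).2⟩

lemma prodChannel_funSplitAt_symm [Fintype ι] [DecidableEq ι] (K : ι → X → β → ℝ) (x : ι → X)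
    (k : ι) (y : β) (r : {j // j ≠ k} → β) :
    prodChannel K x ((Equiv.funSplitAt k β).symm (y, r))
      = K k (x k) y * prodChannel (fun j : {j // j ≠ k} => K j) (fun j => x j) r := by
  rw [prodChannel, Fintype.prod_eq_mul_prod_subtype_ne _ k]
  congr 1
  · simp
  · exact prod_congr rfl fun j _ => by simp [j.2]

lemma abs_natEnt_channelOut_prodChannel_sub_le_of_eq_of_ne [Fintype A] [Fintype X] [Fintype β]
    [Fintype ι] [DecidableEq ι] {K₁ K₂ : ι → X → β → ℝ} (hK₁ : ∀ i x, IsPMF (K₁ i x))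
    (hK₂ : ∀ i x, IsPMF (K₂ i x)) {k : ι} (hne : ∀ i, i ≠ k → K₁ i = K₂ i)
    {μ : A → (ι → X) → ℝ} (hμ : ∀ a x, 0 ≤ μ a x) (hμ₁ : ∑ a, ∑ x, μ a x = 1) {ε : ℝ}
    (hε : ε ≤ 1) (h : ∀ x, ∑ y, |K₁ k x y - K₂ k x y| ≤ ε) :
    |natEnt (channelOut (prodChannel K₁) μ) - natEnt (channelOut (prodChannel K₂) μ)|
      ≤ 2 * ε * log (Fintype.card β) + 2 * binEntropy ε := by
  -- the output coordinates other than `k` join the side information, and what is left is the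
  -- single channel `x ↦ K (x k)`
  let e : (A × ({j // j ≠ k} → β)) × β ≃ A × (ι → β) :=
    (Equiv.prodAssoc _ _ _).trans
      ((Equiv.refl A).prodCongr ((Equiv.prodComm _ β).trans (Equiv.funSplitAt k β).symm))
  let c : A × ({j // j ≠ k} → β) → (ι → X) → ℝ :=
    fun b x => prodChannel (fun j : {j // j ≠ k} => K₁ j) (fun j => x j) b.2 * μ b.1 x
  have hc : ∀ b x, 0 ≤ c b x := fun b x =>
    mul_nonneg ((isPMF_prodChannel (fun j : {j // j ≠ k} => hK₁ j) _).1 _) (hμ _ _)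
  have hc₁ : ∑ b, ∑ x, c b x = 1 := by
    rw [Fintype.sum_prod_type, ← hμ₁]
    refine sum_congr rfl fun a _ => ?_
    rw [sum_comm]
    refine sum_congr rfl fun x _ => ?_
    simp only [c]
    rw [← sum_mul, (isPMF_prodChannel (fun j : {j // j ≠ k} => hK₁ j) _).2, one_mul]
  have hsplit : ∀ K : ι → X → β → ℝ, (∀ i, i ≠ k → K i = K₁ i) →
      (fun t => channelOut (prodChannel K) μ (e t)) = channelOut (fun x y => K k (x k) y) c := by
    intro K hK
    funext ⟨⟨a, r⟩, y⟩
    have he : e ((a, r), y) = (a, (Equiv.funSplitAt k β).symm (y, r)) := rfl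
    have hoff : (fun j : {j // j ≠ k} => K j) = fun j : {j // j ≠ k} => K₁ j :=
      funext fun j => hK j j.2
    simp only [channelOut, he, prodChannel_funSplitAt_symm, c, hoff, mul_assoc]
  rw [← natEnt_comp_equiv e, ← natEnt_comp_equiv e (channelOut (prodChannel K₂) μ),
    hsplit K₁ fun _ _ => rfl, hsplit K₂ fun i hi => (hne i hi).symm]
  exact (abs_natEnt_channelOut_sub_le (fun x => hK₁ k (x k)) (fun x => hK₂ k (x k)) hc hc₁ hε
    fun x => h (x k) :)

lemma abs_natEnt_channelOut_prodChannel_sub_le [Fintype A] [Fintype X] [Fintype β] [Fintype ι]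
    [DecidableEq ι] {K K' : ι → X → β → ℝ} (hK : ∀ i x, IsPMF (K i x))
    (hK' : ∀ i x, IsPMF (K' i x)) {μ : A → (ι → X) → ℝ} (hμ : ∀ a x, 0 ≤ μ a x)
    (hμ₁ : ∑ a, ∑ x, μ a x = 1) {ε : ℝ} (hε : ε ≤ 1)
    (h : ∀ i x, ∑ y, |K i x y - K' i x y| ≤ ε) :
    |natEnt (channelOut (prodChannel K) μ) - natEnt (channelOut (prodChannel K') μ)|
      ≤ Fintype.card ι * (2 * ε * log (Fintype.card β) + 2 * binEntropy ε) := by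
  set δ := 2 * ε * log (Fintype.card β) + 2 * binEntropy ε
  have hpiecewise : ∀ (s : Finset ι) i x, IsPMF (s.piecewise K K' i x) := fun s i x => by
    by_cases hi : i ∈ s <;> simp [hi, hK, hK']
  -- hybrid argument: switch from `K'` to `K` one coordinate at a time
  have hybrid : ∀ s : Finset ι, |natEnt (channelOut (prodChannel (s.piecewise K K')) μ)
      - natEnt (channelOut (prodChannel K') μ)| ≤ #s * δ := by
    intro s
    induction s using Finset.induction_on with
    | empty => simp
    | insert k s hk ih =>
      have hstep := abs_natEnt_channelOut_prodChannel_sub_le_of_eq_of_ne (hpiecewise (insert k s))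
        (hpiecewise s) (k := k) (fun i hi => by simp [hi]) hμ hμ₁ hε
        (by simpa [hk] using h k)
      calc _ ≤ δ + #s * δ := (abs_sub_le _ _ _).trans (add_le_add hstep ih)
        _ = #(insert k s) * δ := by rw [card_insert_of_notMem hk]; push_cast; ring
  simpa using hybrid univ

end Channel

section Extrema

variable {S T : Type*} [Finite S] [Finite T] [Nonempty S] [Nonempty T] {f : S → ℝ} {g : T → ℝ}
  {c : ℝ}

lemma abs_ciInf_sub_ciInf_le (h₁ : ∀ t, ∃ s, |f s - g t| ≤ c) (h₂ : ∀ s, ∃ t, |f s - g t| ≤ c) :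
    |(⨅ s, f s) - ⨅ t, g t| ≤ c := by
  have hf := (Set.finite_range f).bddBelow
  have hg := (Set.finite_range g).bddBelow
  rw [abs_sub_le_iff, sub_le_comm, sub_le_comm (b := ⨅ s, f s)]
  constructor
  · refine le_ciInf fun t => ?_
    obtain ⟨s, hs⟩ := h₁ t
    linarith [ciInf_le hf s, (abs_le.1 hs).2]
  · refine le_ciInf fun s => ?_
    obtain ⟨t, ht⟩ := h₂ s
    linarith [ciInf_le hg t, (abs_le.1 ht).1]

lemma abs_ciSup_sub_ciSup_le (h₁ : ∀ t, ∃ s, |f s - g t| ≤ c) (h₂ : ∀ s, ∃ t, |f s - g t| ≤ c) :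
    |(⨆ s, f s) - ⨆ t, g t| ≤ c := by
  have hf := (Set.finite_range f).bddAbove
  have hg := (Set.finite_range g).bddAbove
  rw [abs_sub_le_iff, sub_le_iff_le_add, sub_le_iff_le_add]
  constructor
  · refine ciSup_le fun s => ?_
    obtain ⟨t, ht⟩ := h₂ s
    linarith [le_ciSup hg t, (abs_le.1 ht).2]
  · refine ciSup_le fun t => ?_
    obtain ⟨s, hs⟩ := h₁ t
    linarith [le_ciSup hf s, (abs_le.1 hs).1]

end Extrema

section ConditionalMutualInformation

variable {α β γ : Type*} [Fintype α] [Fintype β] [Fintype γ]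

lemma abs_ent_sub_ent (p q : α → ℝ) : |ent p - ent q| = |natEnt p - natEnt q| / log 2 := by
  rw [ent_eq_natEnt_div_log_two, ent_eq_natEnt_div_log_two, ← sub_div, abs_div,
    abs_of_pos (log_pos one_lt_two)]

lemma condMI_sub_condMI_of_sum_eq {p q : α × β × γ → ℝ}
    (h : ∀ a b, ∑ c, p (a, b, c) = ∑ c, q (a, b, c)) :
    condMI p - condMI q
      = (ent (fun x : α × γ => ∑ b, p (x.1, b, x.2))
          - ent (fun x : α × γ => ∑ b, q (x.1, b, x.2))) - (ent p - ent q) := by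
  have h₂ : (fun x : α × β => ∑ c, p (x.1, x.2, c)) = fun x => ∑ c, q (x.1, x.2, c) :=
    funext fun x => h x.1 x.2
  have h₁ : (fun a => ∑ b, ∑ c, p (a, b, c)) = fun a => ∑ b, ∑ c, q (a, b, c) :=
    funext fun a => sum_congr rfl fun b _ => h a b
  rw [condMI, condMI, h₂, h₁]
  ring

end ConditionalMutualInformation

section Broadcast

/-- Joint law of `((U, V), Xⁿ)` for the Markov chain `U — V — Xⁿ`. -/
noncomputable def inputJoint {U V X : Type*} {n : ℕ} (PU : U → ℝ) (PVU : U → V → ℝ)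
    (E : V → (Fin n → X) → ℝ) : U × V → (Fin n → X) → ℝ :=
  fun p x => E p.2 x * PVU p.1 p.2 * PU p.1

variable {U V X Y : Type*} [Fintype X] {n : ℕ} {PU : U → ℝ} {PVU : U → V → ℝ}
  {E : V → (Fin n → X) → ℝ}

lemma inputJoint_nonneg [Fintype U] [Fintype V] (hPU : IsPMF PU) (hPVU : ∀ u, IsPMF (PVU u))
    (hE : ∀ v, IsPMF (E v)) (p : U × V) (x : Fin n → X) : 0 ≤ inputJoint PU PVU E p x :=
  mul_nonneg (mul_nonneg ((hE p.2).1 x) ((hPVU p.1).1 p.2)) (hPU.1 p.1)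

lemma sum_inputJoint [Fintype U] [Fintype V] (hPU : IsPMF PU) (hPVU : ∀ u, IsPMF (PVU u))
    (hE : ∀ v, IsPMF (E v)) :
    ∑ p, ∑ x, inputJoint PU PVU E p x = 1 := by
  simp only [inputJoint, ← sum_mul, (hE _).2, one_mul, Fintype.sum_prod_type, (hPVU _).2, hPU.2]

lemma PUVOut_eq_channelOut (C : X → Y → ℝ) (u : U) (v : V) (y : Fin n → Y) :
    PUVOut n C PU PVU E (u, v, y)
      = channelOut (prodChannel fun _ => C) (inputJoint PU PVU E) ((u, v), y) :=
  sum_congr rfl fun x _ => by simp only [prodChannel, inputJoint]; ring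

lemma natEnt_PUVOut [Fintype U] [Fintype V] [Fintype Y] (C : X → Y → ℝ) :
    natEnt (PUVOut n C PU PVU E)
      = natEnt (channelOut (prodChannel fun _ => C) (inputJoint PU PVU E)) := by
  rw [← natEnt_comp_equiv (Equiv.prodAssoc U V (Fin n → Y))]
  exact congrArg natEnt (funext fun t => PUVOut_eq_channelOut C t.1.1 t.1.2 t.2)

lemma sum_PUVOut_eq_channelOut [Fintype V] [Fintype Y] (C : X → Y → ℝ) :
    (fun t : U × (Fin n → Y) => ∑ v, PUVOut n C PU PVU E (t.1, v, t.2))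
      = channelOut (prodChannel fun _ => C) (fun u x => ∑ v, inputJoint PU PVU E (u, v) x) := by
  funext t
  simp only [PUVOut_eq_channelOut, channelOut, mul_sum]
  exact sum_comm

lemma abs_condMI_PUVOut_sub_le [Fintype U] [Fintype V] [Fintype Y] {C C' : X → Y → ℝ}
    (hC : ∀ x, IsPMF (C x)) (hC' : ∀ x, IsPMF (C' x)) {ε : ℝ} (hε : ε ≤ 1)
    (h : ∀ x, ∑ y, |C x y - C' x y| ≤ ε) (hPU : IsPMF PU) (hPVU : ∀ u, IsPMF (PVU u))
    (hE : ∀ v, IsPMF (E v)) :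
    |condMI (PUVOut n C PU PVU E) - condMI (PUVOut n C' PU PVU E)|
      ≤ n * (4 * ε * logb 2 (Fintype.card Y) + 4 * H2 ε) := by
  set δ := 2 * ε * log (Fintype.card Y) + 2 * binEntropy ε
  have hJ := inputJoint_nonneg hPU hPVU hE
  have hJ₁ := sum_inputJoint hPU hPVU hE
  have hmarg : ∀ u v,
      ∑ y, PUVOut n C PU PVU E (u, v, y) = ∑ y, PUVOut n C' PU PVU E (u, v, y) := by
    intro u v
    simp only [PUVOut_eq_channelOut, sum_channelOut (isPMF_prodChannel fun _ => hC),
      sum_channelOut (isPMF_prodChannel fun _ => hC')]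
  have hUY : |ent (fun t : U × (Fin n → Y) => ∑ v, PUVOut n C PU PVU E (t.1, v, t.2))
      - ent (fun t : U × (Fin n → Y) => ∑ v, PUVOut n C' PU PVU E (t.1, v, t.2))|
      ≤ n * δ / log 2 := by
    rw [abs_ent_sub_ent, sum_PUVOut_eq_channelOut, sum_PUVOut_eq_channelOut]
    gcongr
    simpa using abs_natEnt_channelOut_prodChannel_sub_le (fun _ => hC) (fun _ => hC')
      (fun u x => sum_nonneg fun v _ => hJ (u, v) x)
      (by rw [← hJ₁, Fintype.sum_prod_type]; exact sum_congr rfl fun u _ => sum_comm) hε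
      fun _ => h
  have hUVY : |ent (PUVOut n C PU PVU E) - ent (PUVOut n C' PU PVU E)| ≤ n * δ / log 2 := by
    rw [abs_ent_sub_ent, natEnt_PUVOut, natEnt_PUVOut]
    gcongr
    simpa using abs_natEnt_channelOut_prodChannel_sub_le (fun _ => hC) (fun _ => hC') hJ hJ₁ hε
      fun _ => h
  rw [condMI_sub_condMI_of_sum_eq hmarg]
  calc _ ≤ n * δ / log 2 + n * δ / log 2 := (abs_sub _ _).trans (add_le_add hUY hUVY)
    _ = _ := by rw [H2_eq_binEntropy_div_log_two, logb]; ring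

end Broadcast

end InformationTheory

open InformationTheory in
theorem confidential_rate_continuity_general
    {X Y Z S1 S2 U V : Type*}
    [Fintype X] [Fintype Y] [Fintype Z] [Fintype S1] [Fintype S2] [Fintype U] [Fintype V]
    [Nonempty Y] [Nonempty Z] [Nonempty S1] [Nonempty S2]
    (ε : ℝ) (hε : ε ∈ Set.Ioo (0 : ℝ) 1)
    (W1 : S1 → X → Y → ℝ) (V1 : S1 → X → Z → ℝ)
    (W2 : S2 → X → Y → ℝ) (V2 : S2 → X → Z → ℝ)
    (hW1 : ∀ s x, IsPMF (W1 s x)) (hV1 : ∀ s x, IsPMF (V1 s x))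
    (hW2 : ∀ s x, IsPMF (W2 s x)) (hV2 : ∀ s x, IsPMF (V2 s x))
    (hDW1 : ∀ s2, ∃ s1, ∀ x, ∑ y, |W1 s1 x y - W2 s2 x y| ≤ ε)
    (hDW2 : ∀ s1, ∃ s2, ∀ x, ∑ y, |W1 s1 x y - W2 s2 x y| ≤ ε)
    (hDV1 : ∀ s2, ∃ s1, ∀ x, ∑ z, |V1 s1 x z - V2 s2 x z| ≤ ε)
    (hDV2 : ∀ s1, ∃ s2, ∀ x, ∑ z, |V1 s1 x z - V2 s2 x z| ≤ ε)
    (n : ℕ) (hn : 1 ≤ n)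
    (PU : U → ℝ) (PVU : U → V → ℝ) (E : V → (Fin n → X) → ℝ)
    (hPU : IsPMF PU) (hPVU : ∀ u, IsPMF (PVU u)) (hE : ∀ v, IsPMF (E v)) :
    |(1 / n : ℝ) * ((⨅ s : S1, condMI (PUVOut n (W1 s) PU PVU E))
        - ⨆ s : S1, condMI (PUVOut n (V1 s) PU PVU E))
      - (1 / n : ℝ) * ((⨅ s : S2, condMI (PUVOut n (W2 s) PU PVU E))
        - ⨆ s : S2, condMI (PUVOut n (V2 s) PU PVU E))|
      ≤ 4 * ε * Real.logb 2 ((Fintype.card Y : ℝ) * (Fintype.card Z : ℝ)) + 8 * H2 ε := by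
  have hW : ∀ s1 s2, (∀ x, ∑ y, |W1 s1 x y - W2 s2 x y| ≤ ε) →
      |condMI (PUVOut n (W1 s1) PU PVU E) - condMI (PUVOut n (W2 s2) PU PVU E)|
        ≤ n * (4 * ε * logb 2 (Fintype.card Y) + 4 * H2 ε) := fun s1 s2 h =>
    abs_condMI_PUVOut_sub_le (hW1 s1) (hW2 s2) hε.2.le h hPU hPVU hE
  have hV : ∀ s1 s2, (∀ x, ∑ z, |V1 s1 x z - V2 s2 x z| ≤ ε) →
      |condMI (PUVOut n (V1 s1) PU PVU E) - condMI (PUVOut n (V2 s2) PU PVU E)|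
        ≤ n * (4 * ε * logb 2 (Fintype.card Z) + 4 * H2 ε) := fun s1 s2 h =>
    abs_condMI_PUVOut_sub_le (hV1 s1) (hV2 s2) hε.2.le h hPU hPVU hE
  have hinf := abs_ciInf_sub_ciInf_le (fun t => (hDW1 t).imp fun s => hW s t)
    fun s => (hDW2 s).imp fun t => hW s t
  have hsup := abs_ciSup_sub_ciSup_le (fun t => (hDV1 t).imp fun s => hV s t)
    fun s => (hDV2 s).imp fun t => hV s t
  have hn₀ : (0 : ℝ) < n := by exact_mod_cast hn
  rw [← mul_sub, abs_mul, abs_of_pos (one_div_pos.2 hn₀), one_div_mul_eq_div, div_le_iff₀ hn₀,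
    logb_mul (by positivity) (by positivity), sub_sub_sub_comm]
  exact (abs_sub _ _).trans ((add_le_add hinf hsup).trans_eq (by ring))

/-- continuity of the maximum achievable confidential-message rate of
the compound BCC.  The hypotheses `hDW1, hDW2, hDV1, hDV2` express `D(𝔚₁,𝔚₂) ≤ ε`. -/
theorem confidential_rate_continuity
    {X Y Z S1 S2 U V : Type*}
    [Fintype X] [Fintype Y] [Fintype Z] [Fintype S1] [Fintype S2] [Fintype U] [Fintype V]
    [Nonempty X] [Nonempty Y] [Nonempty Z] [Nonempty S1] [Nonempty S2] [Nonempty U] [Nonempty V]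
    (ε : ℝ) (hε : ε ∈ Set.Ioo (0 : ℝ) 1)
    (W1 : S1 → X → Y → ℝ) (V1 : S1 → X → Z → ℝ)
    (W2 : S2 → X → Y → ℝ) (V2 : S2 → X → Z → ℝ)
    (hW1 : ∀ s x, IsPMF (W1 s x)) (hV1 : ∀ s x, IsPMF (V1 s x))
    (hW2 : ∀ s x, IsPMF (W2 s x)) (hV2 : ∀ s x, IsPMF (V2 s x))
    (hDW1 : ∀ s2, ∃ s1, ∀ x, ∑ y, |W1 s1 x y - W2 s2 x y| ≤ ε)
    (hDW2 : ∀ s1, ∃ s2, ∀ x, ∑ y, |W1 s1 x y - W2 s2 x y| ≤ ε)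
    (hDV1 : ∀ s2, ∃ s1, ∀ x, ∑ z, |V1 s1 x z - V2 s2 x z| ≤ ε)
    (hDV2 : ∀ s1, ∃ s2, ∀ x, ∑ z, |V1 s1 x z - V2 s2 x z| ≤ ε)
    (n : ℕ) (hn : 1 ≤ n)
    (PU : U → ℝ) (PVU : U → V → ℝ) (E : V → (Fin n → X) → ℝ)
    (hPU : IsPMF PU) (hPVU : ∀ u, IsPMF (PVU u)) (hE : ∀ v, IsPMF (E v)) :
    |(1 / n : ℝ) * ((⨅ s : S1, condMI (PUVOut n (W1 s) PU PVU E))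
        - ⨆ s : S1, condMI (PUVOut n (V1 s) PU PVU E))
      - (1 / n : ℝ) * ((⨅ s : S2, condMI (PUVOut n (W2 s) PU PVU E))
        - ⨆ s : S2, condMI (PUVOut n (V2 s) PU PVU E))|
      ≤ 4 * ε * Real.logb 2 ((Fintype.card Y : ℝ) * (Fintype.card Z : ℝ)) + 8 * H2 ε :=
  confidential_rate_continuity_general ε hε W1 V1 W2 V2 hW1 hV1 hW2 hV2 hDW1 hDW2 hDV1 hDV2 n hn PU
    PVU E hPU hPVU hE
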